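/- arXiv:2408.17144 — 2 statements merged into one kernel-verified Lean document; each statement's English description precedes it below -/
import Mathlib

section
/- Let 0 < α < 1 and let f, g ∈ C¹[0,T]. Then ∫₀ᵀ D^α f(t) g(t) dt = ∫₀ᵀ f(t) ∂_{t,T}^α g(t) dt + [g(t) I^{1−α} f(t)]_{t=0}^{t=T}, where D^α is the left Riemann–Liouville derivative, ∂_{t,T}^α the right Caputo derivative, and I^{1−α} the left Riemann–Liouville integral of order 1−α. -/
/-- Left Riemann–Liouville fractional integral of order `α` with base point `0`. -/
noncomputable def fracIntL (α : ℝ) (f : ℝ → ℝ) (t : ℝ) : ℝ :=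
  (Real.Gamma α)⁻¹ * ∫ τ in (0:ℝ)..t, (t - τ) ^ (α - 1) * f τ

/-- Left Riemann–Liouville fractional derivative of order `α` with base point `0`. -/
noncomputable def rlDerivL (α : ℝ) (f : ℝ → ℝ) (t : ℝ) : ℝ :=
  deriv (fun s => (Real.Gamma (1 - α))⁻¹ * ∫ τ in (0:ℝ)..s, (s - τ) ^ (-α) * f τ) t

/-- Right Caputo fractional derivative of order `α` with upper base point `T`. -/
noncomputable def caputoR (α T : ℝ) (g : ℝ → ℝ) (t : ℝ) : ℝ :=
  -(Real.Gamma (1 - α))⁻¹ * ∫ τ in t..T, deriv g τ * (τ - t) ^ (-α)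

/-!
Substituting `τ = t * w` gives `I^β f t = t ^ β / Γ(β) * ∫₀¹ (1 - w) ^ (β - 1) * f (t * w) dw`.
The singular kernel now sits at the fixed endpoint `w = 1`, so differentiating under the integral
sign shows that `I^β f` is continuous on `[0, T]` and differentiable on `(0, T]` with derivative
`O(t ^ (β - 1))`, hence integrable. With `β = 1 - α` this derivative is `D^α f`, and ordinary
integration by parts against `g` produces the boundary term and `-∫ I^{1-α} f · g'`. Swapping the
order of integration over the triangle `0 < τ < t < T` turns the left fractional integral into the
right one, and `∂^α_{t,T} g = -I^{1-α}_{T-} g'`.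
-/

open MeasureTheory Set Filter
open scoped Interval

section UnitInterval

variable {β : ℝ}

theorem intervalIntegrable_one_sub_rpow (hβ : 0 < β) :
    IntervalIntegrable (fun w : ℝ => (1 - w) ^ (β - 1)) volume 0 1 := by
  simpa using (intervalIntegral.intervalIntegrable_rpow' (a := 1) (b := 0)
    (show -1 < β - 1 by linarith)).comp_sub_left 1

theorem exists_bound_one_sub_rpow_mul {Ψ : ℝ → ℝ → ℝ} (hΨ : Continuous (Function.uncurry Ψ))
    (s₀ : ℝ) : ∃ M, ∀ s ∈ Metric.closedBall s₀ 1, ∀ w ∈ Ι (0 : ℝ) 1,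
      ‖(1 - w) ^ (β - 1) * Ψ s w‖ ≤ (1 - w) ^ (β - 1) * M := by
  obtain ⟨M, hM⟩ := ((isCompact_closedBall s₀ 1).prod isCompact_Icc).exists_bound_of_continuousOn
    (hΨ.continuousOn (s := Metric.closedBall s₀ 1 ×ˢ Icc (0 : ℝ) 1))
  refine ⟨M, fun s hs w hw => ?_⟩
  rw [uIoc_of_le zero_le_one] at hw
  have hw' : 0 ≤ 1 - w := by linarith [hw.2]
  rw [norm_mul, Real.norm_of_nonneg (Real.rpow_nonneg hw' _)]
  exact mul_le_mul_of_nonneg_left (hM (s, w) ⟨hs, Ioc_subset_Icc_self hw⟩)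
    (Real.rpow_nonneg hw' _)

theorem continuous_integral_one_sub_rpow_mul (hβ : 0 < β) {Ψ : ℝ → ℝ → ℝ}
    (hΨ : Continuous (Function.uncurry Ψ)) :
    Continuous fun s => ∫ w in (0 : ℝ)..1, (1 - w) ^ (β - 1) * Ψ s w := by
  refine continuous_iff_continuousAt.2 fun s₀ => ?_
  obtain ⟨M, hM⟩ := exists_bound_one_sub_rpow_mul (β := β) hΨ s₀
  refine intervalIntegral.continuousAt_of_dominated_interval
    (Eventually.of_forall fun s => ?_) ?_ ((intervalIntegrable_one_sub_rpow hβ).mul_const M)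
    (Eventually.of_forall fun w _ => continuousAt_const.mul (hΨ.uncurry_right w).continuousAt)
  · exact (((measurable_const.sub measurable_id).pow_const _).mul
      (hΨ.uncurry_left s).measurable).aestronglyMeasurable
  · filter_upwards [Metric.closedBall_mem_nhds s₀ one_pos] with s hs
    exact Eventually.of_forall fun w hw => hM s hs w hw

noncomputable def rescaledFracInt (β : ℝ) (f : ℝ → ℝ) (t : ℝ) : ℝ :=
  ∫ w in (0 : ℝ)..1, (1 - w) ^ (β - 1) * f (t * w)

theorem integral_rpow_sub_mul_eq_rpow_mul_rescaledFracInt (hβ : β ≠ 0) {t : ℝ} (ht : 0 ≤ t)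
    (f : ℝ → ℝ) :
    ∫ τ in (0 : ℝ)..t, (t - τ) ^ (β - 1) * f τ = t ^ β * rescaledFracInt β f t := by
  rcases ht.eq_or_lt with rfl | ht
  · simp [Real.zero_rpow hβ]
  have hsub := intervalIntegral.integral_comp_mul_left
    (fun τ => (t - τ) ^ (β - 1) * f τ) (a := 0) (b := 1) ht.ne'
  have hscale : ∫ w in (0 : ℝ)..1, (t - t * w) ^ (β - 1) * f (t * w) =
      t ^ (β - 1) * rescaledFracInt β f t := by
    rw [rescaledFracInt, ← intervalIntegral.integral_const_mul]
    refine intervalIntegral.integral_congr fun w hw => ?_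
    rw [uIcc_of_le zero_le_one] at hw
    rw [show t - t * w = t * (1 - w) by ring,
      Real.mul_rpow ht.le (by linarith [hw.2]), mul_assoc]
  simp only [mul_zero, mul_one, smul_eq_mul, hscale] at hsub
  rw [Real.rpow_sub_one ht.ne'] at hsub
  field_simp at hsub
  linarith

theorem continuous_rescaledFracInt (hβ : 0 < β) {f : ℝ → ℝ} (hf : Continuous f) :
    Continuous (rescaledFracInt β f) :=
  continuous_integral_one_sub_rpow_mul hβ (Ψ := fun s w => f (s * w)) (by fun_prop)

theorem hasDerivAt_rescaledFracInt (hβ : 0 < β) {f : ℝ → ℝ} (hf : ContDiff ℝ 1 f) (s : ℝ) :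
    HasDerivAt (rescaledFracInt β f)
      (∫ w in (0 : ℝ)..1, (1 - w) ^ (β - 1) * (deriv f (s * w) * w)) s := by
  have hf₀ : Continuous f := hf.continuous
  have hf' : Continuous (deriv f) := hf.continuous_deriv le_rfl
  obtain ⟨M, hM⟩ := exists_bound_one_sub_rpow_mul (β := β)
    (Ψ := fun s w => deriv f (s * w) * w) (by fun_prop) s
  have hmeas : ∀ g : ℝ → ℝ, Continuous g →
      AEStronglyMeasurable (fun w : ℝ => (1 - w) ^ (β - 1) * g w) (volume.restrict (Ι 0 1)) :=
    fun g hg => (((measurable_const.sub measurable_id).pow_const _).mul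
      hg.measurable).aestronglyMeasurable
  refine (intervalIntegral.hasDerivAt_integral_of_dominated_loc_of_deriv_le
    (Metric.ball_mem_nhds s one_pos)
    (Eventually.of_forall fun x => hmeas _ (by fun_prop : Continuous fun w => f (x * w)))
    ((intervalIntegrable_one_sub_rpow hβ).mul_continuousOn
      (by fun_prop : Continuous fun w => f (s * w)).continuousOn)
    (hmeas _ (by fun_prop)) (Eventually.of_forall fun w hw x hx =>
      hM x (Metric.ball_subset_closedBall hx) w hw)
    ((intervalIntegrable_one_sub_rpow hβ).mul_const M)
    (Eventually.of_forall fun w _ x _ => ?_)).2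
  exact ((hf.differentiable one_ne_zero _).hasDerivAt.comp x (hasDerivAt_mul_const w)).const_mul _

end UnitInterval

section FractionalIntegral

variable {β : ℝ} {f : ℝ → ℝ}

theorem fracIntL_eq_rpow_mul_rescaledFracInt (hβ : β ≠ 0) {t : ℝ} (ht : 0 ≤ t) :
    fracIntL β f t = (Real.Gamma β)⁻¹ * (t ^ β * rescaledFracInt β f t) := by
  rw [fracIntL, integral_rpow_sub_mul_eq_rpow_mul_rescaledFracInt hβ ht]

theorem continuousOn_fracIntL (hβ : 0 < β) (hf : Continuous f) :
    ContinuousOn (fracIntL β f) (Ici 0) :=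
  (continuousOn_const.mul ((Real.continuous_rpow_const hβ.le).mul
    (continuous_rescaledFracInt hβ hf)).continuousOn).congr
    fun _ ht => fracIntL_eq_rpow_mul_rescaledFracInt hβ.ne' ht

theorem hasDerivAt_fracIntL (hβ : 0 < β) (hf : ContDiff ℝ 1 f) {t : ℝ} (ht : 0 < t) :
    HasDerivAt (fracIntL β f) ((Real.Gamma β)⁻¹ * (β * t ^ (β - 1) * rescaledFracInt β f t +
      t ^ β * ∫ w in (0 : ℝ)..1, (1 - w) ^ (β - 1) * (deriv f (t * w) * w))) t := by
  refine (((Real.hasDerivAt_rpow_const (Or.inl ht.ne')).mul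
    (hasDerivAt_rescaledFracInt hβ hf t)).const_mul _).congr_of_eventuallyEq ?_
  filter_upwards [Ioi_mem_nhds ht] with s hs
    using fracIntL_eq_rpow_mul_rescaledFracInt hβ.ne' (le_of_lt hs)

theorem intervalIntegrable_deriv_fracIntL (hβ : 0 < β) (hf : ContDiff ℝ 1 f) {T : ℝ}
    (hT : 0 ≤ T) : IntervalIntegrable (deriv (fracIntL β f)) volume 0 T := by
  have hf' : Continuous (deriv f) := hf.continuous_deriv le_rfl
  have hK' := continuous_integral_one_sub_rpow_mul hβ
    (Ψ := fun s w => deriv f (s * w) * w) (by fun_prop)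
  refine IntervalIntegrable.congr_uIoo (IntervalIntegrable.const_mul ?_ _)
    fun t ht => ((hasDerivAt_fracIntL hβ hf ?_).deriv).symm
  · exact (((intervalIntegral.intervalIntegrable_rpow' (by linarith)).const_mul β).mul_continuousOn
      (continuous_rescaledFracInt hβ hf.continuous).continuousOn).add
      (((Real.continuous_rpow_const hβ.le).mul hK').intervalIntegrable _ _)
  · rw [uIoo_of_le hT] at ht
    exact ht.1

end FractionalIntegral

theorem integral_integral_triangle_swap {E : Type*} [NormedAddCommGroup E] [NormedSpace ℝ E]
    {F : ℝ → ℝ → E} {a b : ℝ} (hab : a ≤ b)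
    (hF : IntegrableOn (Function.uncurry F) ({p | p.2 < p.1} ∩ Ioc a b ×ˢ Ioc a b)) :
    ∫ t in a..b, ∫ τ in a..t, F t τ = ∫ τ in a..b, ∫ t in τ..b, F t τ := by
  set G : ℝ → ℝ → E := fun t τ => if τ < t then F t τ else 0
  have hG : IntegrableOn (Function.uncurry G) (uIoc a b ×ˢ uIoc a b) := by
    rw [uIoc_of_le hab]
    exact ((integrableOn_indicator_iff (measurableSet_lt measurable_snd measurable_fst)).2
      hF).congr_fun (fun ⟨t, τ⟩ _ => by simp [G, indicator_apply])
      (measurableSet_Ioc.prod measurableSet_Ioc)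
  have inner_left : ∀ t ∈ uIcc a b, ∫ τ in a..b, G t τ = ∫ τ in a..t, F t τ := by
    intro t ht
    rw [uIcc_of_le hab] at ht
    have hslice : (fun τ => G t τ) = (Iio t).indicator (F t) := by
      ext τ; simp [G, indicator_apply]
    rw [hslice, intervalIntegral.integral_of_le hab, setIntegral_indicator measurableSet_Iio,
      intervalIntegral.integral_of_le ht.1, integral_Ioc_eq_integral_Ioo,
      show Ioc a b ∩ Iio t = Ioo a t by
        ext; simp only [mem_inter_iff, mem_Ioc, mem_Iio, mem_Ioo]; grind]
  have inner_right : ∀ τ ∈ uIcc a b, ∫ t in a..b, G t τ = ∫ t in τ..b, F t τ := by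
    intro τ hτ
    rw [uIcc_of_le hab] at hτ
    have hslice : (fun t => G t τ) = (Ioi τ).indicator (fun t => F t τ) := by
      ext t; simp [G, indicator_apply]
    rw [hslice, intervalIntegral.integral_of_le hab, setIntegral_indicator measurableSet_Ioi,
      intervalIntegral.integral_of_le hτ.2,
      show Ioc a b ∩ Ioi τ = Ioc τ b by ext; simp only [mem_inter_iff, mem_Ioc, mem_Ioi]; grind]
  rw [← intervalIntegral.integral_congr inner_left, ← intervalIntegral.integral_congr inner_right]
  exact intervalIntegral_intervalIntegral_swap hG

theorem integrableOn_rpow_sub_triangle {r a b : ℝ} (hr : -1 < r) :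
    IntegrableOn (fun p : ℝ × ℝ => (p.1 - p.2) ^ r) ({p | p.2 < p.1} ∩ Ioc a b ×ˢ Ioc a b) := by
  -- on the triangle the integrand is the convolution integrand of `1_(a,b]` and `1_(0,b-a] x^r`
  have hk : Integrable ((Ioc 0 (b - a)).indicator fun x : ℝ => x ^ r) :=
    (integrable_indicator_iff measurableSet_Ioc).2 (intervalIntegral.intervalIntegrable_rpow' hr).1
  have h1 : Integrable ((Ioc a b).indicator fun _ : ℝ => (1 : ℝ)) :=
    (integrable_indicator_iff measurableSet_Ioc).2 (integrableOn_const measure_Ioc_lt_top.ne)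
  have hconv := h1.convolution_integrand (ContinuousLinearMap.mul ℝ ℝ) hk
  rw [← Measure.volume_eq_prod] at hconv
  refine hconv.integrableOn.congr_fun (fun ⟨t, τ⟩ ⟨hτt, ht, hτ⟩ => ?_)
    ((measurableSet_lt measurable_snd measurable_fst).inter
      (measurableSet_Ioc.prod measurableSet_Ioc))
  simp only [mem_ofPred_eq, mem_Ioc] at hτt ht hτ
  simp only [ContinuousLinearMap.mul_apply', indicator_apply, mem_Ioc]
  rw [if_pos hτ, if_pos ⟨by linarith, by linarith⟩, one_mul]

noncomputable def fracIntR (β T : ℝ) (ψ : ℝ → ℝ) (t : ℝ) : ℝ :=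
  (Real.Gamma β)⁻¹ * ∫ τ in t..T, ψ τ * (τ - t) ^ (β - 1)

theorem integral_fracIntL_mul_eq_integral_mul_fracIntR {β T : ℝ} (hβ : 0 < β) (hT : 0 ≤ T)
    {φ ψ : ℝ → ℝ} (hφ : Continuous φ) (hψ : Continuous ψ) :
    ∫ t in 0..T, fracIntL β φ t * ψ t = ∫ t in 0..T, φ t * fracIntR β T ψ t := by
  simp only [fracIntL, fracIntR, mul_assoc, mul_left_comm (φ _),
    intervalIntegral.integral_const_mul]
  congr 1
  have hF : IntegrableOn (Function.uncurry fun t τ => (t - τ) ^ (β - 1) * (φ τ * ψ t))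
      ({p | p.2 < p.1} ∩ Ioc 0 T ×ˢ Ioc 0 T) :=
    (integrableOn_rpow_sub_triangle (by linarith)).mul_continuousOn_of_subset
      (by fun_prop : Continuous fun p : ℝ × ℝ => φ p.2 * ψ p.1).continuousOn
      ((measurableSet_lt measurable_snd measurable_fst).inter
        (measurableSet_Ioc.prod measurableSet_Ioc))
      (isCompact_Icc.prod isCompact_Icc)
      (inter_subset_right.trans (prod_mono Ioc_subset_Icc_self Ioc_subset_Icc_self))
  calc ∫ t in 0..T, (∫ τ in 0..t, (t - τ) ^ (β - 1) * φ τ) * ψ t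
      = ∫ t in 0..T, ∫ τ in 0..t, (t - τ) ^ (β - 1) * (φ τ * ψ t) := by
        simp only [← intervalIntegral.integral_mul_const, mul_assoc]
    _ = ∫ τ in 0..T, ∫ t in τ..T, (t - τ) ^ (β - 1) * (φ τ * ψ t) :=
        integral_integral_triangle_swap hT hF
    _ = ∫ τ in 0..T, φ τ * ∫ t in τ..T, ψ t * (t - τ) ^ (β - 1) := by
        simp only [← intervalIntegral.integral_const_mul, mul_comm (ψ _), mul_left_comm (φ _)]

theorem rlDerivL_eq_deriv_fracIntL (α : ℝ) (f : ℝ → ℝ) :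
    rlDerivL α f = deriv (fracIntL (1 - α) f) := by
  funext t
  rw [rlDerivL]
  congr 1
  funext s
  rw [fracIntL, sub_sub_cancel_left]

theorem caputoR_eq_neg_fracIntR_deriv (α T : ℝ) (g : ℝ → ℝ) :
    caputoR α T g = -fracIntR (1 - α) T (deriv g) := by
  ext t
  simp only [caputoR, fracIntR, sub_sub_cancel_left, Pi.neg_apply, neg_mul]

theorem stmt_11_general (T α : ℝ) (hT : 0 < T) (hα1 : α < 1)
    (f g : ℝ → ℝ) (hf : ContDiff ℝ 1 f) (hg : ContDiff ℝ 1 g) :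
    ∫ t in (0:ℝ)..T, rlDerivL α f t * g t =
      (∫ t in (0:ℝ)..T, f t * caputoR α T g t) +
        (g T * fracIntL (1 - α) f T - g 0 * fracIntL (1 - α) f 0) := by
  have hβ : 0 < 1 - α := by linarith
  have hg' : Continuous (deriv g) := hg.continuous_deriv le_rfl
  have parts := intervalIntegral.integral_mul_deriv_eq_deriv_mul_of_hasDeriv_right
    ((continuousOn_fracIntL hβ hf.continuous).mono (uIcc_of_le hT.le ▸ Icc_subset_Ici_self))
    hg.continuous.continuousOn
    (fun t ht => (hasDerivAt_fracIntL hβ hf ((le_min le_rfl hT.le).trans_lt ht.1)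
      ).differentiableAt.hasDerivAt.hasDerivWithinAt)
    (fun t _ => (hg.differentiable one_ne_zero t).hasDerivAt.hasDerivWithinAt)
    (intervalIntegrable_deriv_fracIntL hβ hf hT.le) (hg'.intervalIntegrable 0 T)
  rw [integral_fracIntL_mul_eq_integral_mul_fracIntR hβ hT.le hf.continuous hg'] at parts
  simp only [rlDerivL_eq_deriv_fracIntL, caputoR_eq_neg_fracIntR_deriv, Pi.neg_apply, mul_neg,
    intervalIntegral.integral_neg]
  linarith

/-- Lemma 2.1: fractional integration by parts with boundary terms. -/
theorem stmt_11 (T α : ℝ) (hT : 0 < T) (hα : 0 < α) (hα1 : α < 1)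
    (f g : ℝ → ℝ) (hf : ContDiff ℝ 1 f) (hg : ContDiff ℝ 1 g) :
    ∫ t in (0:ℝ)..T, rlDerivL α f t * g t =
      (∫ t in (0:ℝ)..T, f t * caputoR α T g t) +
        (g T * fracIntL (1 - α) f T - g 0 * fracIntL (1 - α) f 0) :=
  stmt_11_general T α hT hα1 f g hf hg
end

section
/- Let 0 < α < 1 and let w : [0,T] → ℝ be continuously differentiable with w(0) = 0. Then for every t ∈ (0,T], w(t) · ∂^α w(t) ≥ (1/2) ∂^α (w²)(t), where ∂^α denotes the left Caputo fractional derivative. -/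
/-!
Up to the positive factor `Γ(1 - α)⁻¹`, the difference of the two sides is
`∫₀ᵗ (w t - w τ) w'(τ) (t - τ)^(-α) dτ`. On `[0, s]` with `s < t`, integration by parts against
`-(1/2) (w t - w τ)²` bounds this integral below by `-(1/2) (t - s)^(-α) (w t - w s)²`: the other
two terms are nonnegative because the kernel `(t - τ)^(-α)` is increasing for `α ≥ 0`.
As `s → t⁻` that bound is `O((t - s)^(2 - α)) → 0`, since `w` is differentiable at `t`.
-/

/-- Left Caputo fractional derivative of order `α` with base point `0`. -/
noncomputable def caputoL (α : ℝ) (f : ℝ → ℝ) (t : ℝ) : ℝ :=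
  (Real.Gamma (1 - α))⁻¹ * ∫ τ in (0:ℝ)..t, deriv f τ * (t - τ) ^ (-α)

open MeasureTheory intervalIntegral Set Filter Topology

section AbelKernel

variable {α t : ℝ}

theorem intervalIntegrable_sub_rpow_neg (hα1 : α < 1) (a : ℝ) :
    IntervalIntegrable (fun τ : ℝ => (t - τ) ^ (-α)) volume a t := by
  simpa using ((intervalIntegrable_rpow' (a := 0) (b := t - a) (r := -α)
    (by linarith)).comp_sub_left t).symm

theorem hasDerivAt_sub_rpow_neg {x : ℝ} (hx : x < t) :
    HasDerivAt (fun τ : ℝ => (t - τ) ^ (-α)) (α * (t - x) ^ (-α - 1)) x := by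
  have h := (Real.hasDerivAt_rpow_const (x := t - x) (p := -α) (Or.inl (by linarith))).comp x
    ((hasDerivAt_id x).const_sub t)
  exact h.congr_deriv (by ring)

theorem tendsto_sub_rpow_neg_mul_sq_sub {w : ℝ → ℝ} (hα2 : α < 2)
    (hw : DifferentiableAt ℝ w t) :
    Tendsto (fun s => (t - s) ^ (-α) * (w t - w s) ^ 2) (𝓝[<] t) (𝓝 0) := by
  have hslope : Tendsto (fun s => slope w t s ^ 2) (𝓝[<] t) (𝓝 (deriv w t ^ 2)) :=
    ((hasDerivAt_iff_tendsto_slope.1 hw.hasDerivAt).mono_left (nhdsLT_le_nhdsNE t)).pow 2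
  have hpow : Tendsto (fun s => (t - s) ^ (2 - α)) (𝓝[<] t) (𝓝 0) := by
    have hsub : Tendsto (fun s => t - s) (𝓝[<] t) (𝓝 0) := by
      simpa using ((continuous_sub_left t).tendsto t).mono_left nhdsWithin_le_nhds
    have h := (Real.continuousAt_rpow_const 0 (2 - α) (Or.inr (by linarith))).tendsto.comp hsub
    rwa [Real.zero_rpow (by linarith)] at h
  have hprod := hslope.mul hpow
  rw [mul_zero] at hprod
  refine hprod.congr' ?_
  filter_upwards [self_mem_nhdsWithin] with s (hs : s < t)
  have hts : 0 < t - s := by linarith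
  rw [slope_def_field, div_pow, show (2:ℝ) - α = -α + 2 by ring, Real.rpow_add hts,
    Real.rpow_two, show (s - t) ^ 2 = (t - s) ^ 2 by ring,
    show (w s - w t) ^ 2 = (w t - w s) ^ 2 by ring]
  field_simp

end AbelKernel

section CaputoGap

variable {α t : ℝ} {w : ℝ → ℝ}

theorem hasDerivAt_neg_half_mul_sq_sub {x : ℝ} (hw : DifferentiableAt ℝ w x) :
    HasDerivAt (fun τ => -(1 / 2) * (w t - w τ) ^ 2) ((w t - w x) * deriv w x) x := by
  have h := (((hasDerivAt_const x (w t)).sub hw.hasDerivAt).pow 2).const_mul (-(1 / 2 : ℝ))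
  exact h.congr_deriv (by simp only [Pi.sub_apply, Nat.cast_ofNat, pow_one]; ring)

theorem intervalIntegrable_caputo_gap (hα1 : α < 1) (hw : ContDiff ℝ 1 w) (a : ℝ) :
    IntervalIntegrable (fun τ => (w t - w τ) * deriv w τ * (t - τ) ^ (-α)) volume a t :=
  (intervalIntegrable_sub_rpow_neg hα1 a).continuousOn_mul
    ((continuous_const.sub hw.continuous).mul (hw.continuous_deriv le_rfl)).continuousOn

theorem neg_half_mul_le_integral_caputo_gap (hα : 0 ≤ α) (hw : ContDiff ℝ 1 w) {a s : ℝ}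
    (has : a ≤ s) (hst : s < t) :
    -(1 / 2) * (t - s) ^ (-α) * (w t - w s) ^ 2 ≤
      ∫ τ in a..s, (w t - w τ) * deriv w τ * (t - τ) ^ (-α) := by
  set u : ℝ → ℝ := fun τ => (t - τ) ^ (-α)
  set v : ℝ → ℝ := fun τ => -(1 / 2) * (w t - w τ) ^ 2
  have hlt : ∀ x ∈ uIcc a s, x < t := fun x hx => by
    rw [uIcc_of_le has] at hx; exact hx.2.trans_lt hst
  have hu : ∀ x ∈ uIcc a s, HasDerivAt u (α * (t - x) ^ (-α - 1)) x :=
    fun x hx => hasDerivAt_sub_rpow_neg (hlt x hx)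
  have hv : ∀ x ∈ uIcc a s, HasDerivAt v ((w t - w x) * deriv w x) x :=
    fun x _ => hasDerivAt_neg_half_mul_sq_sub (hw.differentiable one_ne_zero x)
  have hu'int : IntervalIntegrable (fun x => α * (t - x) ^ (-α - 1)) volume a s :=
    (continuousOn_const.mul ((continuousOn_const.sub continuousOn_id).rpow_const
      fun x hx => Or.inl (sub_ne_zero.2 (hlt x hx).ne'))).intervalIntegrable
  have hv'int : IntervalIntegrable (fun x => (w t - w x) * deriv w x) volume a s :=
    ((continuous_const.sub hw.continuous).mul (hw.continuous_deriv le_rfl)).intervalIntegrable a s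
  have ibp := integral_mul_deriv_eq_deriv_mul hu hv hu'int hv'int
  have hboundary : u a * v a ≤ 0 :=
    mul_nonpos_of_nonneg_of_nonpos (Real.rpow_nonneg (by linarith) _)
      (by simp only [v]; nlinarith [sq_nonneg (w t - w a)])
  have hinterior : 0 ≤ ∫ x in a..s, -(α * (t - x) ^ (-α - 1) * v x) := by
    refine integral_nonneg has fun x hx => neg_nonneg.2 (mul_nonpos_of_nonneg_of_nonpos
      (mul_nonneg hα (Real.rpow_nonneg ?_ _)) (by simp only [v]; nlinarith [sq_nonneg (w t - w x)]))
    linarith [hlt x (by rw [uIcc_of_le has]; exact hx)]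
  rw [intervalIntegral.integral_neg] at hinterior
  calc -(1 / 2) * (t - s) ^ (-α) * (w t - w s) ^ 2 = u s * v s := by simp only [u, v]; ring
    _ ≤ u s * v s - u a * v a - ∫ x in a..s, α * (t - x) ^ (-α - 1) * v x := by linarith
    _ = ∫ τ in a..s, (w t - w τ) * deriv w τ * (t - τ) ^ (-α) := by
      rw [← ibp]; exact integral_congr fun τ _ => by simp only [u]; ring

theorem integral_caputo_gap_nonneg (hα : 0 ≤ α) (hα1 : α < 1) (hw : ContDiff ℝ 1 w) {a : ℝ}
    (hat : a < t) :
    0 ≤ ∫ τ in a..t, (w t - w τ) * deriv w τ * (t - τ) ^ (-α) := by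
  have hprimitive : Tendsto (fun s => ∫ τ in a..s, (w t - w τ) * deriv w τ * (t - τ) ^ (-α))
      (𝓝[<] t) (𝓝 (∫ τ in a..t, (w t - w τ) * deriv w τ * (t - τ) ^ (-α))) := by
    have h := continuousOn_primitive_interval' (intervalIntegrable_caputo_gap (t := t) hα1 hw a)
      left_mem_uIcc
    rw [uIcc_of_le hat.le] at h
    exact (h t (right_mem_Icc.2 hat.le)).tendsto.mono_left (nhdsWithin_le_of_mem
      (mem_of_superset (Ioo_mem_nhdsLT hat) Ioo_subset_Icc_self))
  have hboundary := ((tendsto_sub_rpow_neg_mul_sq_sub (α := α) (by linarith)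
    (hw.differentiable one_ne_zero t)).const_mul (-(1 / 2) : ℝ))
  rw [mul_zero] at hboundary
  refine le_of_tendsto_of_tendsto hboundary hprimitive ?_
  filter_upwards [Ioo_mem_nhdsLT hat] with s hs
  rw [← mul_assoc]
  exact neg_half_mul_le_integral_caputo_gap hα hw hs.1.le hs.2

end CaputoGap

theorem mul_caputoL_sub_half_caputoL_sq {α t : ℝ} (hα1 : α < 1) {w : ℝ → ℝ}
    (hw : ContDiff ℝ 1 w) :
    w t * caputoL α w t - 1 / 2 * caputoL α (fun s => w s ^ 2) t =
      (Real.Gamma (1 - α))⁻¹ * ∫ τ in (0:ℝ)..t, (w t - w τ) * deriv w τ * (t - τ) ^ (-α) := by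
  have hkernel := intervalIntegrable_sub_rpow_neg (t := t) hα1 0
  have hw' := hw.continuous_deriv le_rfl
  have hsq : ∫ τ in (0:ℝ)..t, deriv (fun s => w s ^ 2) τ * (t - τ) ^ (-α) =
      ∫ τ in (0:ℝ)..t, 2 * w τ * deriv w τ * (t - τ) ^ (-α) :=
    integral_congr fun τ _ => by simp [deriv_fun_pow (hw.differentiable one_ne_zero τ)]
  have hsqint : IntervalIntegrable (fun τ => 2 * w τ * deriv w τ * (t - τ) ^ (-α)) volume 0 t :=
    hkernel.continuousOn_mul ((continuous_const.mul hw.continuous).mul hw').continuousOn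
  have hgap : w t * (∫ τ in (0:ℝ)..t, deriv w τ * (t - τ) ^ (-α)) -
      1 / 2 * ∫ τ in (0:ℝ)..t, 2 * w τ * deriv w τ * (t - τ) ^ (-α) =
      ∫ τ in (0:ℝ)..t, (w t - w τ) * deriv w τ * (t - τ) ^ (-α) := by
    rw [← intervalIntegral.integral_const_mul, ← intervalIntegral.integral_const_mul,
      ← integral_sub (hkernel.continuousOn_mul hw'.continuousOn |>.const_mul _) (hsqint.const_mul _)]
    exact integral_congr fun τ _ => by ring
  unfold caputoL
  rw [hsq, ← hgap]
  ring

theorem stmt_12_general (T α : ℝ) (hα : 0 < α) (hα1 : α < 1)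
    (w : ℝ → ℝ) (hw : ContDiff ℝ 1 w) :
    ∀ t ∈ Set.Ioc (0:ℝ) T,
      w t * caputoL α w t ≥ (1 / 2) * caputoL α (fun s => (w s) ^ 2) t := by
  intro t ht
  have hΓ : 0 ≤ (Real.Gamma (1 - α))⁻¹ := (inv_pos.2 (Real.Gamma_pos_of_pos (by linarith))).le
  rw [ge_iff_le, ← sub_nonneg, mul_caputoL_sub_half_caputoL_sq hα1 hw]
  exact mul_nonneg hΓ (integral_caputo_gap_nonneg hα.le hα1 hw ht.1)

/-- Alikhanov's inequality: `w(t) ∂^α w(t) ≥ (1/2) ∂^α (w²)(t)`. -/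
theorem stmt_12 (T α : ℝ) (hT : 0 < T) (hα : 0 < α) (hα1 : α < 1)
    (w : ℝ → ℝ) (hw : ContDiff ℝ 1 w) (hw0 : w 0 = 0) :
    ∀ t ∈ Set.Ioc (0:ℝ) T,
      w t * caputoL α w t ≥ (1 / 2) * caputoL α (fun s => (w s) ^ 2) t :=
  stmt_12_general T α hα hα1 w hw
end
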